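/- arXiv:2207.07807 — 4 statements merged into one kernel-verified Lean document; each statement's English description precedes it below -/
import Mathlib

section
/- Let $A = \bigoplus_{i \ge 0} A_i$ be a noetherian graded ring and $M$ a finitely generated graded $A$-module. The map $F : \operatorname{Ass}_A(M) \to \operatorname{Ass}_{A_0}(M)$ defined by $F(P) = P \cap A_0$ is well defined and surjective. -/
open RingTheory.Sequence

/-- The dimension of a module `M` over `R`: the Krull dimension of `R ⧸ Ann_R(M)`. -/
noncomputable def moduleDim (R M : Type*) [CommRing R] [AddCommGroup M] [Module R M] :
    WithBot ℕ∞ :=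
  ringKrullDim (R ⧸ Module.annihilator R M)

open Classical in
/-- The depth of a module `M` over a local ring `R`: `⊤` if `M = 0`, otherwise the
supremum of lengths of `M`-regular sequences contained in the maximal ideal. -/
noncomputable def moduleDepth (R M : Type*) [CommRing R] [IsLocalRing R]
    [AddCommGroup M] [Module R M] : ℕ∞ :=
  if Subsingleton M then ⊤
  else sSup {n : ℕ∞ | ∃ rs : List R, (rs.length : ℕ∞) = n ∧
    (∀ x ∈ rs, x ∈ IsLocalRing.maximalIdeal R) ∧ RingTheory.Sequence.IsRegular M rs}

open Classical in
/-- The codepth of a module over a local ring: `⊥` if `M = 0`, else `dim M - depth M`. -/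
noncomputable def moduleCodepth (R M : Type*) [CommRing R] [IsLocalRing R]
    [AddCommGroup M] [Module R M] : WithBot ℕ∞ :=
  if Subsingleton M then ⊥
  else (((moduleDim R M).unbotD 0 - moduleDepth R M : ℕ∞) : WithBot ℕ∞)

/-- A localized module `M_𝔭` is Cohen–Macaulay over `R_𝔭`. -/
noncomputable def isCMAt (R M : Type*) [CommRing R] [AddCommGroup M] [Module R M]
    (𝔭 : Ideal R) [𝔭.IsPrime] : Prop :=
  moduleDim (Localization.AtPrime 𝔭) (LocalizedModule 𝔭.primeCompl M)
    ≤ (moduleDepth (Localization.AtPrime 𝔭) (LocalizedModule 𝔭.primeCompl M) : WithBot ℕ∞)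

/-- The Cohen–Macaulay locus of a ring `R`. -/
noncomputable def cmRingLocus (R : Type*) [CommRing R] : Set (PrimeSpectrum R) :=
  {𝔭 | moduleDim (Localization.AtPrime 𝔭.asIdeal) (Localization.AtPrime 𝔭.asIdeal)
    ≤ (moduleDepth (Localization.AtPrime 𝔭.asIdeal) (Localization.AtPrime 𝔭.asIdeal) :
        WithBot ℕ∞)}

/-- The `n`-th codepth locus of a module. -/
noncomputable def codepthLocus (R M : Type*) [CommRing R] [AddCommGroup M] [Module R M]
    (n : ℕ) : Set (PrimeSpectrum R) :=
  {𝔭 | moduleCodepth (Localization.AtPrime 𝔭.asIdeal)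
        (LocalizedModule 𝔭.asIdeal.primeCompl M) ≤ (n : ℕ∞)}

/-- A ring is catenary if any two saturated chains of primes with the same endpoints
have the same length. -/
def IsCatenary (R : Type*) [CommRing R] : Prop :=
  ∀ c₁ c₂ : RelSeries {p : PrimeSpectrum R × PrimeSpectrum R | p.1 ⋖ p.2},
    c₁.head = c₂.head → c₁.last = c₂.last → c₁.length = c₂.length

open Classical in
/-- The grade of an ideal `J` on a module `M`. -/
noncomputable def moduleGrade {R : Type*} (M : Type*) [CommRing R] [AddCommGroup M]
    [Module R M] (J : Ideal R) : ℕ∞ :=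
  if J • (⊤ : Submodule R M) = ⊤ then ⊤
  else sSup {n : ℕ∞ | ∃ rs : List R, (rs.length : ℕ∞) = n ∧
    (∀ x ∈ rs, x ∈ J) ∧ RingTheory.Sequence.IsWeaklyRegular M rs}

/-- The Cohen–Macaulay locus of a module `M` over `R`. -/
noncomputable def cmLocus (R M : Type*) [CommRing R] [AddCommGroup M] [Module R M] :
    Set (PrimeSpectrum R) :=
  {𝔭 | moduleDim (Localization.AtPrime 𝔭.asIdeal) (LocalizedModule 𝔭.asIdeal.primeCompl M)
    ≤ (moduleDepth (Localization.AtPrime 𝔭.asIdeal)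
        (LocalizedModule 𝔭.asIdeal.primeCompl M) : WithBot ℕ∞)}

/-!
An element `x : M` has the same annihilator in `A₀` as the contraction of its annihilator in `A`,
and contraction commutes with radicals, so associated primes contract to associated primes.
Conversely, if `𝔭 = √(ann_{A₀} x)` is prime, then `𝔭` is the contraction of `√(ann_A x)`, the
intersection of the finitely many minimal primes over `ann_A x`; a prime equal to a finite
intersection of primes is one of them, and minimal primes over an annihilator are associated.
-/

open Submodule

theorem Ideal.exists_mem_minimalPrimes_comap_eq_of_comap_radical {R S : Type*} [CommSemiring R]
    [CommSemiring S] [IsNoetherianRing S] (f : R →+* S) {I : Ideal S} {𝔭 : Ideal R}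
    (h𝔭 : 𝔭.IsPrime) (hI : 𝔭 = I.radical.comap f) :
    ∃ P ∈ I.minimalPrimes, P.comap f = 𝔭 := by
  have hfin := I.finite_minimalPrimes_of_isNoetherianRing S
  have hinf : (hfin.toFinset.inf fun P ↦ P.comap f) ≤ 𝔭 := by
    rw [hI, ← I.sInf_minimalPrimes, Ideal.comap_sInf]
    exact le_iInf₂ fun P hP ↦ Finset.inf_le (hfin.mem_toFinset.mpr hP)
  obtain ⟨P, hP, hP𝔭⟩ := h𝔭.inf_le'.mp hinf
  rw [Set.Finite.mem_toFinset] at hP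
  refine ⟨P, hP, le_antisymm hP𝔭 ?_⟩
  rw [hI, ← I.sInf_minimalPrimes]
  exact Ideal.comap_mono (sInf_le hP)

theorem isAssociatedPrime_of_mem_minimalPrimes_bot_colon {S M : Type*} [CommSemiring S]
    [IsNoetherianRing S] [AddCommMonoid M] [Module S M] {P : Ideal S} {x : M}
    (hP : P ∈ ((⊥ : Submodule S M).colon {x}).minimalPrimes) : IsAssociatedPrime P M :=
  isAssociatedPrime_iff.mpr ⟨hP.1.1, exists_eq_colon_of_mem_minimalPrimes hP⟩

section Contraction

variable {R S M : Type*} [CommSemiring R] [CommSemiring S] [Algebra R S]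
  [AddCommMonoid M] [Module R M] [Module S M] [IsScalarTower R S M]

theorem Submodule.comap_algebraMap_bot_colon_singleton (x : M) :
    ((⊥ : Submodule S M).colon {x}).comap (algebraMap R S) = (⊥ : Submodule R M).colon {x} := by
  ext c
  simp only [Ideal.mem_comap, mem_colon_singleton, mem_bot, algebraMap_smul]

theorem IsAssociatedPrime.comap_algebraMap {P : Ideal S} (h : IsAssociatedPrime P M) :
    IsAssociatedPrime (P.comap (algebraMap R S)) M := by
  obtain ⟨hP, x, rfl⟩ := h
  exact ⟨hP.comap _, x, by
    rw [Ideal.comap_radical, comap_algebraMap_bot_colon_singleton]⟩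

theorem IsAssociatedPrime.exists_comap_algebraMap_eq [IsNoetherianRing S] {𝔭 : Ideal R}
    (h : IsAssociatedPrime 𝔭 M) :
    ∃ P, IsAssociatedPrime P M ∧ P.comap (algebraMap R S) = 𝔭 := by
  obtain ⟨h𝔭, x, hx⟩ := h
  rw [← comap_algebraMap_bot_colon_singleton (S := S), ← Ideal.comap_radical] at hx
  obtain ⟨P, hP, rfl⟩ := Ideal.exists_mem_minimalPrimes_comap_eq_of_comap_radical _ h𝔭 hx
  exact ⟨P, isAssociatedPrime_of_mem_minimalPrimes_bot_colon hP, rfl⟩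

end Contraction

theorem stmt1_general
    (A₀ A M : Type*) [CommRing A₀] [CommRing A] [Algebra A₀ A]
    [IsNoetherianRing A]
    [AddCommGroup M] [Module A₀ M] [Module A M] [IsScalarTower A₀ A M]
    :
    (∀ P ∈ associatedPrimes A M, P.comap (algebraMap A₀ A) ∈ associatedPrimes A₀ M) ∧
    (∀ 𝔭 ∈ associatedPrimes A₀ M,
      ∃ P ∈ associatedPrimes A M, P.comap (algebraMap A₀ A) = 𝔭) :=
  ⟨fun _ hP ↦ IsAssociatedPrime.comap_algebraMap hP,
    fun _ h𝔭 ↦ IsAssociatedPrime.exists_comap_algebraMap_eq h𝔭⟩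

theorem stmt1
    (A₀ A M : Type*) [CommRing A₀] [CommRing A] [Algebra A₀ A]
    [IsNoetherianRing A₀] [IsNoetherianRing A]
    [AddCommGroup M] [Module A₀ M] [Module A M] [IsScalarTower A₀ A M]
    [Module.Finite A M]
    (𝒜 : ℕ → Submodule A₀ A) (ℳ : ℤ → Submodule A₀ M)
    (hinj : Function.Injective (algebraMap A₀ A))
    (hA : DirectSum.IsInternal 𝒜) (hA0 : 𝒜 0 = 1)
    (hAmul : ∀ i j : ℕ, 𝒜 i * 𝒜 j ≤ 𝒜 (i + j))
    (hM : DirectSum.IsInternal ℳ)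
    (hAM : ∀ (i : ℕ) (j : ℤ), ∀ a ∈ 𝒜 i, ∀ m ∈ ℳ j, a • m ∈ ℳ (i + j))
    :
    (∀ P ∈ associatedPrimes A M, P.comap (algebraMap A₀ A) ∈ associatedPrimes A₀ M) ∧
    (∀ 𝔭 ∈ associatedPrimes A₀ M,
      ∃ P ∈ associatedPrimes A M, P.comap (algebraMap A₀ A) = 𝔭) :=
  stmt1_general A₀ A M
end

section
/- Let $A = \bigoplus_{i \ge 0} A_i$ be a noetherian graded ring and $M = \bigoplus_{i \in \mathbb{Z}} M_i$ a finitely generated graded $A$-module. Then $\operatorname{Ass}_{A_0}(M) = \bigcup_{i \in \mathbb{Z}} \operatorname{Ass}_{A_0}(M_i)$, and this set is finite. -/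
open RingTheory.Sequence

/-!
The annihilator of `x = ∑ xᵢ` (finitely many nonzero components) is the intersection of the
annihilators of the `xᵢ`; a prime equal to the radical of a finite intersection is the radical of
one of its members, so every associated prime of `M` is one of some `Mᵢ`.

Finiteness holds for any finite module over a noetherian `A₀`-algebra `A`: a filtration of
`M` by `A`-submodules with successive quotients `A ⧸ 𝔭` reduces it to
`Ass_{A₀}(A ⧸ 𝔭) = {𝔭 ∩ A₀}`.
-/

open Submodule DirectSum

namespace associatedPrimes

theorem directSum {R ι : Type*} [CommSemiring R] (M : ι → Type*) [∀ i, AddCommMonoid (M i)]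
    [∀ i, Module R (M i)] :
    associatedPrimes R (⨁ i, M i) = ⋃ i, associatedPrimes R (M i) := by
  classical
  refine subset_antisymm ?_ (Set.iUnion_subset fun i ↦
    subset_of_injective (f := lof R ι M i) (of_injective i))
  rintro p ⟨hp, x, rfl⟩
  have hcolon (i : ι) : colon ⊥ {x} ≤ colon (⊥ : Submodule R (M i)) {x i} := fun r hr ↦ by
    rw [mem_colon_singleton, mem_bot] at hr ⊢
    rw [← DirectSum.smul_apply, hr, DirectSum.zero_apply]
  have hinf : x.support.inf (fun i ↦ colon (⊥ : Submodule R (M i)) {x i}) ≤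
      (colon ⊥ {x}).radical := by
    refine le_trans (fun r hr ↦ ?_) Ideal.le_radical
    rw [mem_colon_singleton, mem_bot]
    ext i
    rw [DirectSum.smul_apply, DirectSum.zero_apply]
    by_cases hi : i ∈ x.support
    · simpa only [mem_colon_singleton, mem_bot] using
        Finset.inf_le (f := fun i ↦ colon (⊥ : Submodule R (M i)) {x i}) hi hr
    · rw [DFinsupp.notMem_support_iff.mp hi, smul_zero]
  obtain ⟨i, -, hi⟩ := hp.inf_le'.mp hinf
  refine Set.mem_iUnion.mpr ⟨i, hp, x i, le_antisymm (Ideal.radical_mono (hcolon i)) ?_⟩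
  simpa only [Ideal.radical_idem] using Ideal.radical_mono hi

theorem eq_iUnion_of_isInternal {R M ι : Type*} [CommSemiring R] [AddCommMonoid M] [Module R M]
    [DecidableEq ι] {N : ι → Submodule R M} (h : IsInternal N) :
    associatedPrimes R M = ⋃ i, associatedPrimes R (N i) :=
  (LinearEquiv.AssociatedPrimes.eq (LinearEquiv.ofBijective (coeLinearMap N) h)).symm.trans
    (directSum _)

variable {R A M : Type*} [CommRing R] [CommRing A] [Algebra R A]

theorem quotient_subset_singleton_comap (p : Ideal A) [hp : p.IsPrime] :
    associatedPrimes R (A ⧸ p) ⊆ {p.comap (algebraMap R A)} := by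
  rintro q ⟨hq, x, rfl⟩
  obtain ⟨a, rfl⟩ := Ideal.Quotient.mk_surjective x
  have ha : a ∉ p := fun hap ↦ hq.ne_top <| by
    rw [Ideal.Quotient.eq_zero_iff_mem.mpr hap, colon_singleton_zero, Ideal.radical_top]
  have hcolon : colon (⊥ : Submodule R (A ⧸ p)) {Ideal.Quotient.mk p a} =
      p.comap (algebraMap R A) := by
    ext r
    rw [mem_colon_singleton, mem_bot, Ideal.mem_comap, Algebra.smul_def,
      ← Ideal.Quotient.mk_algebraMap, ← map_mul, Ideal.Quotient.eq_zero_iff_mem]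
    exact ⟨fun h ↦ (hp.mem_or_mem h).resolve_right ha, fun h ↦ p.mul_mem_right a h⟩
  rw [hcolon, (Ideal.IsPrime.comap _).radical]
  exact Set.mem_singleton _

variable [AddCommGroup M] [Module R M] [Module A M] [IsScalarTower R A M]

theorem exists_subset_union_of_isQuotientEquivQuotientPrime {N₁ N₂ : Submodule A M}
    (h : N₁.IsQuotientEquivQuotientPrime N₂) :
    ∃ p : Ideal A,
      associatedPrimes R N₂ ⊆ associatedPrimes R N₁ ∪ {p.comap (algebraMap R A)} := by
  obtain ⟨hle, p, ⟨e⟩⟩ := h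
  refine ⟨p.asIdeal,
    (subset_union_of_exact (f := (N₁.submoduleOf N₂).subtype.restrictScalars R)
    (g := (N₁.submoduleOf N₂).mkQ.restrictScalars R) (injective_subtype _)
    (LinearMap.exact_subtype_mkQ _)).trans (Set.union_subset_union ?_ ?_)⟩
  · rw [LinearEquiv.AssociatedPrimes.eq ((submoduleOfEquivOfLe hle).restrictScalars R)]
  · rw [LinearEquiv.AssociatedPrimes.eq (e.restrictScalars R)]
    exact quotient_subset_singleton_comap p.asIdeal

variable (A) in
theorem finite_of_isScalarTower [IsNoetherianRing A] [Module.Finite A M] :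
    (associatedPrimes R M).Finite := by
  obtain ⟨s, hs₁, hs₂⟩ := IsNoetherianRing.exists_relSeries_isQuotientEquivQuotientPrime A M
  have hlast : (associatedPrimes R s.last).Finite := by
    clear hs₂
    induction s using RelSeries.inductionOn' with
    | singleton N =>
      rw [RelSeries.last_singleton]
      obtain rfl : N = ⊥ := hs₁
      simp only [eq_empty_of_subsingleton, Set.finite_empty]
    | snoc s N h ih =>
      obtain ⟨p, hp⟩ := exists_subset_union_of_isQuotientEquivQuotientPrime (R := R) h
      rw [RelSeries.last_snoc]
      exact ((ih hs₁).union (Set.finite_singleton _)).subset hp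
  rw [hs₂] at hlast
  rwa [LinearEquiv.AssociatedPrimes.eq (topEquiv.restrictScalars R)] at hlast

end associatedPrimes

theorem stmt2_general
    (A₀ A M : Type*) [CommRing A₀] [CommRing A] [Algebra A₀ A]
    [IsNoetherianRing A]
    [AddCommGroup M] [Module A₀ M] [Module A M] [IsScalarTower A₀ A M]
    [Module.Finite A M]
    (ℳ : ℤ → Submodule A₀ M)
    (hM : DirectSum.IsInternal ℳ)
    :
    associatedPrimes A₀ M = (⋃ i : ℤ, associatedPrimes A₀ (ℳ i)) ∧
    (associatedPrimes A₀ M).Finite :=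
  ⟨associatedPrimes.eq_iUnion_of_isInternal hM, associatedPrimes.finite_of_isScalarTower A⟩

theorem stmt2
    (A₀ A M : Type*) [CommRing A₀] [CommRing A] [Algebra A₀ A]
    [IsNoetherianRing A₀] [IsNoetherianRing A]
    [AddCommGroup M] [Module A₀ M] [Module A M] [IsScalarTower A₀ A M]
    [Module.Finite A M]
    (𝒜 : ℕ → Submodule A₀ A) (ℳ : ℤ → Submodule A₀ M)
    (hinj : Function.Injective (algebraMap A₀ A))
    (hA : DirectSum.IsInternal 𝒜) (hA0 : 𝒜 0 = 1)
    (hAmul : ∀ i j : ℕ, 𝒜 i * 𝒜 j ≤ 𝒜 (i + j))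
    (hM : DirectSum.IsInternal ℳ)
    (hAM : ∀ (i : ℕ) (j : ℤ), ∀ a ∈ 𝒜 i, ∀ m ∈ ℳ j, a • m ∈ ℳ (i + j))
    :
    associatedPrimes A₀ M = (⋃ i : ℤ, associatedPrimes A₀ (ℳ i)) ∧
    (associatedPrimes A₀ M).Finite :=
  stmt2_general A₀ A M ℳ hM
end

section
/- Let $A = \bigoplus_{i \ge 0} A_i$ be a noetherian graded ring and $M$ a finitely generated graded $A$-module. Let $\mathfrak{p}$ be a prime ideal of $A_0$ and suppose $\mathbf{x} = x_1, \ldots, x_n$ is a sequence of elements of $\mathfrak{p}$ that is an $M_\mathfrak{p}$-regular sequence (where $M_\mathfrak{p}$ denotes localization at the multiplicative set $A_0 \setminus \mathfrak{p}$). Then there exists $f \in A_0 \setminus \mathfrak{p}$ such that $\mathbf{x}$ is an $M_f$-regular sequence. -/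
open RingTheory.Sequence

/-! Replace `A₀ ∖ 𝔭` by any multiplicative set `S`. If `x` is regular on `M_S`, the kernel of `x`
on `M` is a finitely generated `A`-module (as `A` is noetherian) whose localization vanishes, so a
single `f₁ ∈ S` kills it, and `x` stays regular on `M_g` for every `g ∈ S` divisible by `f₁`.
Localization commutes with passing to `M ⧸ xM`, so induction on the sequence, applied to `M ⧸ xM`,
gives `f₂`, and `f₁ f₂` works for the whole sequence. Nontriviality of `M_S` passes to `M_g`
because `powers g ≤ S`. -/

open Pointwise

section

variable {R A M : Type*} [CommRing R] [CommRing A] [Algebra R A]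
  [AddCommGroup M] [Module R M] [Module A M] [IsScalarTower R A M] {S : Submonoid R}

lemma smul_eq_zero_of_dvd {s t : R} {m : M} (hst : s ∣ t) (h : s • m = 0) : t • m = 0 := by
  obtain ⟨c, rfl⟩ := hst
  rw [mul_comm, mul_smul, h, smul_zero]

lemma LocalizedModule.nontrivial_of_le {T : Submonoid R} (hST : S ≤ T)
    [Nontrivial (LocalizedModule T M)] : Nontrivial (LocalizedModule S M) := by
  refine not_subsingleton_iff_nontrivial.mp fun h ↦ not_subsingleton (LocalizedModule T M) ?_
  rw [LocalizedModule.subsingleton_iff] at h ⊢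
  exact fun m ↦ (h m).imp fun _ ⟨hr, hrm⟩ ↦ ⟨hST hr, hrm⟩

lemma LocalizedModule.isSMulRegular_of_smul_eq_zero {x s : R} (hs : s ∈ S)
    (h : ∀ m : M, x • m = 0 → s • m = 0) : IsSMulRegular (LocalizedModule S M) x := by
  refine isSMulRegular_iff_right_eq_zero_of_smul.mpr fun z hz ↦ ?_
  obtain ⟨⟨m, t⟩, rfl⟩ := IsLocalizedModule.mk'_surjective S (LocalizedModule.mkLinearMap S M) z
  rw [Function.uncurry_apply_pair, ← IsLocalizedModule.mk'_smul,
    IsLocalizedModule.mk'_eq_zero'] at hz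
  rw [Function.uncurry_apply_pair, IsLocalizedModule.mk'_eq_zero']
  obtain ⟨u, hu⟩ := hz
  refine ⟨⟨s, hs⟩ * u, ?_⟩
  rw [Submonoid.smul_def, Submonoid.coe_mul, mul_smul]
  exact h _ (by rw [← Submonoid.smul_def, smul_comm, hu])

lemma Submodule.FG.exists_mem_smul_eq_zero {K : Submodule A M} (hK : K.FG)
    (h : ∀ m ∈ K, ∃ s ∈ S, s • m = 0) : ∃ s ∈ S, ∀ m ∈ K, s • m = 0 := by
  classical
  obtain ⟨T, rfl⟩ := hK
  choose! σ hσS hσ using fun t (ht : t ∈ (T : Set M)) ↦ h t (subset_span ht)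
  refine ⟨∏ t ∈ T, σ t, prod_mem hσS, fun m hm ↦ ?_⟩
  rw [← algebraMap_smul A]
  refine mem_annihilator.mp ?_ m hm
  rw [mem_annihilator_span]
  rintro ⟨t, ht⟩
  rw [algebraMap_smul]
  exact smul_eq_zero_of_dvd (Finset.dvd_prod_of_mem σ ht) (hσ t ht)

lemma LocalizedModule.exists_mem_smul_eq_zero_of_isSMulRegular [IsNoetherian A M] {x : R}
    (hx : IsSMulRegular (LocalizedModule S M) x) : ∃ s ∈ S, ∀ m : M, x • m = 0 → s • m = 0 := by
  have hK : ∀ m ∈ Submodule.torsionBy A M (algebraMap R A x), ∃ s ∈ S, s • m = 0 := by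
    intro m hm
    rw [Submodule.mem_torsionBy_iff, algebraMap_smul] at hm
    refine LocalizedModule.mem_ker_mkLinearMap_iff.mp (hx.right_eq_zero_of_smul ?_)
    rw [← map_smul, hm, map_zero]
  obtain ⟨s, hs, hsK⟩ := (IsNoetherian.noetherian _).exists_mem_smul_eq_zero hK
  exact ⟨s, hs, fun m hm ↦ hsK m <| by rwa [Submodule.mem_torsionBy_iff, algebraMap_smul]⟩

variable (S)

lemma Submodule.localized_restrictScalars_smul_top (x : R) :
    ((algebraMap R A x • ⊤ : Submodule A M).restrictScalars R).localized S =
      algebraMap R (Localization S) x • ⊤ := by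
  ext z
  simp only [Submodule.localized, Submodule.mem_localized', Submodule.restrictScalars_mem,
    Submodule.mem_smul_pointwise_iff_exists, Submodule.mem_top, true_and]
  constructor
  · rintro ⟨_, ⟨m, rfl⟩, s, rfl⟩
    refine ⟨IsLocalizedModule.mk' (LocalizedModule.mkLinearMap S M) m s, ?_⟩
    rw [algebraMap_smul, algebraMap_smul, IsLocalizedModule.mk'_smul]
  · rintro ⟨z, rfl⟩
    obtain ⟨⟨m, s⟩, rfl⟩ := IsLocalizedModule.mk'_surjective S (LocalizedModule.mkLinearMap S M) z
    refine ⟨_, ⟨m, rfl⟩, s, ?_⟩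
    simp [algebraMap_smul, IsLocalizedModule.mk'_smul]

/-- The quotient on the right is taken modulo the image of `x` in `A`, so that it is again an
`A`-module. -/
noncomputable def QuotSMulTop.localizedModuleEquiv (x : R) :
    QuotSMulTop (algebraMap R (Localization S) x) (LocalizedModule S M) ≃ₗ[Localization S]
      LocalizedModule S (QuotSMulTop (algebraMap R A x) M) :=
  let P := (algebraMap R A x • ⊤ : Submodule A M).restrictScalars R
  (Submodule.quotEquivOfEq _ _ (Submodule.localized_restrictScalars_smul_top S x).symm).trans <|
    LinearEquiv.extendScalarsOfIsLocalization S (Localization S) <|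
      IsLocalizedModule.linearEquiv S
        (P.toLocalizedQuotient S ∘ₗ (Submodule.Quotient.restrictScalarsEquiv R _).symm.toLinearMap)
        (LocalizedModule.mkLinearMap S _)

variable {S}

theorem LocalizedModule.exists_isRegular_powers [IsNoetherian A M] (rs : List R)
    (hreg : IsRegular (LocalizedModule S M) (rs.map (algebraMap R (Localization S)))) :
    ∃ f ∈ S, ∀ g ∈ S, f ∣ g → IsRegular (LocalizedModule (.powers g) M)
      (rs.map (algebraMap R (Localization (.powers g)))) := by
  induction rs generalizing M with
  | nil =>
    have := hreg.nontrivial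
    refine ⟨1, S.one_mem, fun g hg _ ↦ ?_⟩
    have := LocalizedModule.nontrivial_of_le (M := M) (Submonoid.powers_le.mpr hg)
    exact .nil _ _
  | cons x rs ih =>
    rw [List.map_cons, isRegular_cons_iff, isSMulRegular_algebraMap_iff] at hreg
    obtain ⟨hx, hquot⟩ := hreg
    obtain ⟨f₁, hf₁, hker⟩ := LocalizedModule.exists_mem_smul_eq_zero_of_isSMulRegular (A := A) hx
    obtain ⟨f₂, hf₂, hrs⟩ :=
      ih (((QuotSMulTop.localizedModuleEquiv (A := A) S x).isRegular_congr _).mp hquot)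
    refine ⟨f₁ * f₂, S.mul_mem hf₁ hf₂, fun g hg hfg ↦ ?_⟩
    rw [List.map_cons, isRegular_cons_iff, isSMulRegular_algebraMap_iff]
    refine ⟨LocalizedModule.isSMulRegular_of_smul_eq_zero (Submonoid.mem_powers g) fun m hm ↦
      smul_eq_zero_of_dvd (dvd_of_mul_right_dvd hfg) (hker m hm), ?_⟩
    exact ((QuotSMulTop.localizedModuleEquiv _ x).isRegular_congr _).mpr
      (hrs g hg (dvd_of_mul_left_dvd hfg))

end

theorem stmt7_general
    (A₀ A M : Type*) [CommRing A₀] [CommRing A] [Algebra A₀ A]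
    [IsNoetherianRing A]
    [AddCommGroup M] [Module A₀ M] [Module A M] [IsScalarTower A₀ A M]
    [Module.Finite A M]
    (𝔭 : Ideal A₀) [𝔭.IsPrime]
    (rs : List A₀)
    (hreg : RingTheory.Sequence.IsRegular (LocalizedModule 𝔭.primeCompl M)
      (rs.map (algebraMap A₀ (Localization 𝔭.primeCompl)))) :
    ∃ f : A₀, f ∉ 𝔭 ∧ RingTheory.Sequence.IsRegular (LocalizedModule (Submonoid.powers f) M)
      (rs.map (algebraMap A₀ (Localization (Submonoid.powers f)))) := by
  obtain ⟨f, hf, hreg_f⟩ := LocalizedModule.exists_isRegular_powers (A := A) rs hreg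
  exact ⟨f, hf, hreg_f f hf dvd_rfl⟩

theorem stmt7
    (A₀ A M : Type*) [CommRing A₀] [CommRing A] [Algebra A₀ A]
    [IsNoetherianRing A₀] [IsNoetherianRing A]
    [AddCommGroup M] [Module A₀ M] [Module A M] [IsScalarTower A₀ A M]
    [Module.Finite A M]
    (𝒜 : ℕ → Submodule A₀ A) (ℳ : ℤ → Submodule A₀ M)
    (hinj : Function.Injective (algebraMap A₀ A))
    (hA : DirectSum.IsInternal 𝒜) (hA0 : 𝒜 0 = 1)
    (hAmul : ∀ i j : ℕ, 𝒜 i * 𝒜 j ≤ 𝒜 (i + j))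
    (hM : DirectSum.IsInternal ℳ)
    (hAM : ∀ (i : ℕ) (j : ℤ), ∀ a ∈ 𝒜 i, ∀ m ∈ ℳ j, a • m ∈ ℳ (i + j))
    (𝔭 : Ideal A₀) [𝔭.IsPrime]
    (rs : List A₀) (hrs : ∀ x ∈ rs, x ∈ 𝔭)
    (hreg : RingTheory.Sequence.IsRegular (LocalizedModule 𝔭.primeCompl M)
      (rs.map (algebraMap A₀ (Localization 𝔭.primeCompl)))) :
    ∃ f : A₀, f ∉ 𝔭 ∧ RingTheory.Sequence.IsRegular (LocalizedModule (Submonoid.powers f) M)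
      (rs.map (algebraMap A₀ (Localization (Submonoid.powers f)))) :=
  stmt7_general A₀ A M 𝔭 rs hreg
end

section
/- Let $R$ be a noetherian ring and $\{U_n^t\}_{n \ge 0, t \in \mathbb{Z}}$ a family of open subsets of $\operatorname{Spec}(R)$ such that $U_n^t \subseteq U_n^{t+1}$ and $U_n^t \subseteq U_{n+1}^t$ for all $t \in \mathbb{Z}$ and $n \ge 0$. Then there exists an integer $k$ such that $U_n^t = U_n^k$ for all $t \ge k$ and all $n \ge 0$. -/
open RingTheory.Sequence

/-!
Open subsets of `Spec R` satisfy the ascending chain condition, so the doubly indexed family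
has a maximal member `U N k`, and every `U n t` with `n ≥ N`, `t ≥ k` equals it. Each of the
finitely many remaining rows `t ↦ U n t`, `n < N`, is an ascending chain and stabilises on its
own; beyond all these finitely many indices every row is constant.
-/

open Filter

theorem Monotone.eventuallyConst_atTop_of_wellFoundedGT {ι α : Type*} [SemilatticeSup ι]
    [Nonempty ι] [PartialOrder α] [WellFoundedGT α] {f : ι → α} (hf : Monotone f) :
    EventuallyConst f atTop := by
  obtain ⟨_, ⟨k, rfl⟩, hmax⟩ := wellFounded_gt.has_min (Set.range f) (Set.range_nonempty f)
  exact eventuallyConst_atTop.2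
    ⟨k, fun t hkt => (hf hkt).eq_of_not_lt' (hmax _ (Set.mem_range_self t))⟩

theorem Monotone.eventuallyConst_atTop_swap_of_wellFoundedGT {ι α : Type*} [SemilatticeSup ι]
    [Nonempty ι] [PartialOrder α] [WellFoundedGT α] {f : ℕ → ι → α}
    (hf : Monotone (Function.uncurry f)) : EventuallyConst (Function.swap f) atTop := by
  obtain ⟨⟨N, k⟩, hNk⟩ := eventuallyConst_atTop.1 hf.eventuallyConst_atTop_of_wellFoundedGT
  have hlarge : ∀ᶠ t in atTop, ∀ n, N ≤ n → f n t = f N k :=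
    (eventually_ge_atTop k).mono fun t hkt n hNn => hNk (n, t) ⟨hNn, hkt⟩
  choose s hs using fun n =>
    eventuallyConst_atTop.1 ((monotone_prod_iff.1 hf).1 n).eventuallyConst_atTop_of_wellFoundedGT
  have hsmall : ∀ᶠ t in atTop, ∀ n ∈ Set.Iio N, f n t = f n (s n) :=
    (Set.finite_Iio N).eventually_all.2 fun n _ => (eventually_ge_atTop (s n)).mono (hs n)
  refine (EventuallyConst.const fun n => if n < N then f n (s n) else f N k).congr <|
    (hsmall.and hlarge).mono fun t ht => funext fun n => ?_
  dsimp only [Function.swap]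
  split_ifs with hn
  exacts [(ht.1 n hn).symm, (ht.2 n (not_lt.1 hn)).symm]

theorem stmt9 (R : Type*) [CommRing R] [IsNoetherianRing R]
    (U : ℕ → ℤ → Set (PrimeSpectrum R))
    (hopen : ∀ (n : ℕ) (t : ℤ), IsOpen (U n t))
    (h1 : ∀ (n : ℕ) (t : ℤ), U n t ⊆ U n (t + 1))
    (h2 : ∀ (n : ℕ) (t : ℤ), U n t ⊆ U (n + 1) t) :
    ∃ k : ℤ, ∀ t : ℤ, k ≤ t → ∀ n : ℕ, U n t = U n k := by
  let O : ℕ → ℤ → TopologicalSpace.Opens (PrimeSpectrum R) := fun n t => ⟨U n t, hopen n t⟩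
  have hO : Monotone (Function.uncurry O) :=
    monotone_prod_iff.2 ⟨fun n => monotone_int_of_le_succ (h1 n),
      fun t => monotone_nat_of_le_succ (h2 · t)⟩
  obtain ⟨k, hk⟩ := eventuallyConst_atTop.1 hO.eventuallyConst_atTop_swap_of_wellFoundedGT
  exact ⟨k, fun t hkt n => congrArg SetLike.coe (congrFun (hk t hkt) n)⟩
end
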